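/- arXiv:2501.14537 — 8 statements merged into one kernel-verified Lean document; each statement's English description precedes it below -/
import Mathlib

section
/- Fix a real number p ∈ [0,1). For every p-counter process (e_0,d_0),…,(e_n,d_n) and every index j ≤ n with e_j + d_j > 0, it holds that e_j/(e_j + d_j) ≤ p + 1/(e_j + d_j). -/
/-- Fix `p ∈ [0,1)`. For every `p`-counter process
`(e 0, d 0), …, (e n, d n)` and every index `j ≤ n` with `e j + d j > 0`,
we have `e j / (e j + d j) ≤ p + 1 / (e j + d j)`. -/
theorem counter_e_bound (p : ℝ) (hp0 : 0 ≤ p) (hp1 : p < 1)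
    (n : ℕ) (e d : ℕ → ℕ)
    (hinit : e 0 = 0 ∧ d 0 = 0)
    (hstep : ∀ j, j < n →
      ((e (j + 1) = e j ∧ d (j + 1) = d j + 1 ∧
          (d j = 0 ∨ p * ((e j : ℝ) + (d j : ℝ)) < (e j : ℝ))) ∨
        (e (j + 1) = e j + 1 ∧ d (j + 1) = d j ∧
          1 ≤ d j ∧ (e j : ℝ) ≤ p * ((e j : ℝ) + (d j : ℝ)))))
    (j : ℕ) (hj : j ≤ n) (hpos : 0 < e j + d j) :
    (e j : ℝ) / ((e j : ℝ) + (d j : ℝ)) ≤ p + 1 / ((e j : ℝ) + (d j : ℝ)) := by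
  have key : ∀ k, k ≤ n → (e k : ℝ) ≤ p * ((e k : ℝ) + (d k : ℝ)) + 1 := by
    intro k hk
    induction k with
    | zero =>
      rw [hinit.1, hinit.2]
      push_cast
      nlinarith
    | succ m ih =>
      have hm : m < n := hk
      have ihm := ih (le_of_lt hm)
      rcases hstep m hm with ⟨he, hd, _⟩ | ⟨he, hd, _, hle⟩
      · rw [he, hd]
        push_cast
        nlinarith [hp0, ihm]
      · rw [he, hd]
        push_cast
        nlinarith
  have hs : (0 : ℝ) < (e j : ℝ) + (d j : ℝ) := by
    have : (0 : ℝ) < ((e j + d j : ℕ) : ℝ) := by exact_mod_cast hpos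
    push_cast at this
    linarith
  rw [div_le_iff₀ hs]
  have := key j hj
  field_simp
  nlinarith
end

section
/- Fix a real number p ∈ [0,1). For every p-counter process (e_0,d_0),…,(e_n,d_n) and every index j ≤ n with e_j + d_j > 0, it holds that d_j/(e_j + d_j) ≤ (1 − p) + 1/(e_j + d_j). -/
/-- Fix `p ∈ [0,1)`. For every `p`-counter process
`(e 0, d 0), …, (e n, d n)` and every index `j ≤ n` with `e j + d j > 0`,
we have `d j / (e j + d j) ≤ (1 - p) + 1 / (e j + d j)`. -/
theorem counter_d_bound (p : ℝ) (hp0 : 0 ≤ p) (hp1 : p < 1)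
    (n : ℕ) (e d : ℕ → ℕ)
    (hinit : e 0 = 0 ∧ d 0 = 0)
    (hstep : ∀ j, j < n →
      ((e (j + 1) = e j ∧ d (j + 1) = d j + 1 ∧
          (d j = 0 ∨ p * ((e j : ℝ) + (d j : ℝ)) < (e j : ℝ))) ∨
        (e (j + 1) = e j + 1 ∧ d (j + 1) = d j ∧
          1 ≤ d j ∧ (e j : ℝ) ≤ p * ((e j : ℝ) + (d j : ℝ)))))
    (j : ℕ) (hj : j ≤ n) (hpos : 0 < e j + d j) :
    (d j : ℝ) / ((e j : ℝ) + (d j : ℝ)) ≤ (1 - p) + 1 / ((e j : ℝ) + (d j : ℝ)) := by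
  have key : ∀ k, k ≤ n → (d k : ℝ) ≤ (1 - p) * ((e k : ℝ) + (d k : ℝ)) + 1 := by
    intro k hk
    induction k with
    | zero => simp [hinit.1, hinit.2]
    | succ k ih =>
      have hk' : k < n := hk
      have IH := ih (le_of_lt hk')
      rcases hstep k hk' with ⟨he, hd, hc⟩ | ⟨he, hd, _, hc⟩
      · rw [he, hd]
        push_cast
        rcases hc with h0 | h1
        · rw [h0] at IH ⊢
          push_cast at IH ⊢
          nlinarith [Nat.cast_nonneg (e k) (α := ℝ)]
        · have : (d k : ℝ) < (1 - p) * ((e k : ℝ) + (d k : ℝ)) := by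
            have hd' : (d k : ℝ) = ((e k : ℝ) + (d k : ℝ)) - (e k : ℝ) := by ring
            nlinarith
          nlinarith
      · rw [he, hd]
        push_cast
        nlinarith [Nat.cast_nonneg (d k) (α := ℝ)]
  have hK := key j hj
  have hs : (0 : ℝ) < (e j : ℝ) + (d j : ℝ) := by
    have : (0 : ℕ) < e j + d j := hpos
    exact_mod_cast this
  rw [div_le_iff₀ hs]
  have : ((1 - p) + 1 / ((e j : ℝ) + (d j : ℝ))) * ((e j : ℝ) + (d j : ℝ))
      = (1 - p) * ((e j : ℝ) + (d j : ℝ)) + 1 := by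
    field_simp
  rw [this]; exact hK
end

section
/- Let H be a simple graph on exactly k ≥ 2 vertices containing no pair of false twins. Let G be a simple graph whose vertex set is partitioned into at most k − 1 classes such that any two distinct vertices lying in the same class are false twins in G. Then G is H-free. -/
/-- If `H` has exactly `k ≥ 2` vertices and no pair of false
twins, and the vertex set of `G` is partitioned into at most `k - 1` classes
such that any two distinct vertices in the same class are false twins in `G`,
then `G` is `H`-free. -/
theorem Hfree_of_false_twin_classes {V W : Type*} (G : SimpleGraph V)
    (H : SimpleGraph W) [Fintype W] (k : ℕ) (hk : 2 ≤ k)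
    (hcard : Fintype.card W = k)
    (hH : ∀ a b : W, a ≠ b → ¬ H.Adj a b → H.neighborSet a ≠ H.neighborSet b)
    (f : V → Fin (k - 1))
    (hf : ∀ u v : V, u ≠ v → f u = f v →
      ¬ G.Adj u v ∧ G.neighborSet u = G.neighborSet v) :
    ∀ S : Set V, ¬ Nonempty (G.induce S ≃g H) := by
  intro S ⟨e⟩
  haveI : Fintype S := Fintype.ofEquiv W e.toEquiv.symm
  have hcardS : Fintype.card S = k := by
    rw [← hcard]; exact Fintype.card_congr e.toEquiv
  have hlt : Fintype.card (Fin (k - 1)) < Fintype.card S := by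
    simp [hcardS]; omega
  obtain ⟨a, b, hab, hfab⟩ :=
    Fintype.exists_ne_map_eq_of_card_lt (fun s : S => f s.val) hlt
  have habv : (a : V) ≠ (b : V) := fun h => hab (Subtype.ext h)
  obtain ⟨hnadj, hnbr⟩ := hf a b habv hfab
  have hGadj : ∀ x : V, G.Adj (a : V) x ↔ G.Adj (b : V) x := by
    intro x
    have := Set.ext_iff.mp hnbr x
    simpa [SimpleGraph.mem_neighborSet] using this
  have heq : e a ≠ e b := fun h => hab (e.toEquiv.injective h)
  have hnadjH : ¬ H.Adj (e a) (e b) := by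
    intro h
    exact hnadj ((e.map_adj_iff).mp h)
  apply hH (e a) (e b) heq hnadjH
  ext w
  obtain ⟨x, rfl⟩ := e.toEquiv.surjective w
  simp only [SimpleGraph.mem_neighborSet]
  show H.Adj (e a) (e x) ↔ H.Adj (e b) (e x)
  rw [e.map_adj_iff, e.map_adj_iff]
  exact hGadj x.val
end

section
/- Let H be a simple graph on exactly k ≥ 2 vertices containing no pair of true twins. Let G be a simple graph whose vertex set is partitioned into at most k − 1 classes such that any two distinct vertices lying in the same class are true twins in G. Then G is H-free. -/
/-- If `H` has exactly `k ≥ 2` vertices and no pair of true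
twins, and the vertex set of `G` is partitioned into at most `k - 1` classes
such that any two distinct vertices in the same class are true twins in `G`,
then `G` is `H`-free. -/
theorem Hfree_of_true_twin_classes {V W : Type*} (G : SimpleGraph V)
    (H : SimpleGraph W) [Fintype W] (k : ℕ) (hk : 2 ≤ k)
    (hcard : Fintype.card W = k)
    (hH : ∀ a b : W, a ≠ b → H.Adj a b →
      insert a (H.neighborSet a) ≠ insert b (H.neighborSet b))
    (f : V → Fin (k - 1))
    (hf : ∀ u v : V, u ≠ v → f u = f v →
      G.Adj u v ∧ insert u (G.neighborSet u) = insert v (G.neighborSet v)) :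
    ∀ S : Set V, ¬ Nonempty (G.induce S ≃g H) := by
  rintro S ⟨φ⟩
  haveI : Fintype S := Fintype.ofEquiv W φ.toEquiv.symm
  have hcardS : Fintype.card S = k := by
    rw [← hcard]; exact Fintype.card_congr φ.toEquiv
  have hlt : Fintype.card (Fin (k - 1)) < Fintype.card S := by
    rw [hcardS, Fintype.card_fin]; omega
  obtain ⟨u, v, huv, hfe⟩ :=
    Fintype.exists_ne_map_eq_of_card_lt (fun s : S => f s) hlt
  have huv' : (u : V) ≠ (v : V) := fun h => huv (Subtype.ext h)
  obtain ⟨hadj, htwin⟩ := hf u v huv' hfe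
  have key : ∀ x : V, (x = ↑u ∨ G.Adj ↑u x) ↔ (x = ↑v ∨ G.Adj ↑v x) := by
    intro x
    have := Set.ext_iff.mp htwin x
    simpa [SimpleGraph.mem_neighborSet] using this
  have hmap : ∀ (a b : S), H.Adj (φ a) (φ b) ↔ G.Adj (a : V) (b : V) :=
    fun a b => φ.map_adj_iff
  refine hH (φ u) (φ v) (fun h => huv (φ.toEquiv.injective h))
    ((hmap u v).mpr hadj) ?_
  have h3 : ∀ s : S, ((φ s = φ u ∨ H.Adj (φ u) (φ s)) ↔ (φ s = φ v ∨ H.Adj (φ v) (φ s))) := by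
    intro s
    have e1 : (φ s = φ u) ↔ ((s : V) = ↑u) :=
      ⟨fun h => congrArg Subtype.val (φ.toEquiv.injective h),
       fun h => congrArg φ (Subtype.ext h)⟩
    have e2 : (φ s = φ v) ↔ ((s : V) = ↑v) :=
      ⟨fun h => congrArg Subtype.val (φ.toEquiv.injective h),
       fun h => congrArg φ (Subtype.ext h)⟩
    rw [e1, e2, hmap u s, hmap v s]
    exact key _
  ext y
  have hy : φ (φ.symm y) = y := φ.apply_symm_apply y
  simp only [Set.mem_insert_iff, SimpleGraph.mem_neighborSet]
  have := h3 (φ.symm y)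
  rw [hy] at this
  exact this
end

section
/- Let G be a finite simple graph, let A and B be disjoint sets of vertices of G such that every vertex of A is adjacent in G to every vertex of B, and let S ⊆ A ∪ B be a set of vertices such that the induced subgraph G[S] is isomorphic to the path P_k on k ≥ 5 vertices. Then S ⊆ A or S ⊆ B. -/
lemma aux_three_neighbors {V : Type*} [Fintype V] (G : SimpleGraph V) (k : ℕ)
    (S T : Set V) (f : G.induce S ≃g SimpleGraph.pathGraph k)
    (h3 : 3 ≤ (S ∩ T).ncard) (b : V) (hbS : b ∈ S)
    (hadj : ∀ a ∈ S ∩ T, G.Adj a b) : False := by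
  classical
  have hfin : (S ∩ T).Finite := Set.toFinite _
  have hcard : 2 < hfin.toFinset.card := by
    rw [← Set.ncard_eq_toFinset_card _ hfin]
    omega
  obtain ⟨a1, a2, a3, ha1, ha2, ha3, h12, h13, h23⟩ :=
    Finset.two_lt_card_iff.1 hcard
  rw [Set.Finite.mem_toFinset] at ha1 ha2 ha3
  have key : ∀ a (ha : a ∈ S ∩ T),
      (f ⟨a, ha.1⟩).val + 1 = (f ⟨b, hbS⟩).val ∨
      (f ⟨b, hbS⟩).val + 1 = (f ⟨a, ha.1⟩).val := by
    intro a ha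
    have hadj' : (G.induce S).Adj ⟨a, ha.1⟩ ⟨b, hbS⟩ := by
      simp [SimpleGraph.comap_adj, hadj a ha]
    have := f.map_adj_iff.2 hadj'
    exact SimpleGraph.pathGraph_adj.1 this
  have hinj : ∀ {x y : V} (hx : x ∈ S ∩ T) (hy : y ∈ S ∩ T), x ≠ y →
      (f ⟨x, hx.1⟩).val ≠ (f ⟨y, hy.1⟩).val := by
    intro x y hx hy hxy h
    apply hxy
    have := f.toEquiv.injective (Fin.val_injective h)
    exact congrArg Subtype.val this
  have k1 := key a1 ha1
  have k2 := key a2 ha2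
  have k3 := key a3 ha3
  have d12 := hinj ha1 ha2 h12
  have d13 := hinj ha1 ha3 h13
  have d23 := hinj ha2 ha3 h23
  omega

/-- Let `A` and `B` be disjoint vertex sets of a finite graph
`G` with all cross edges present. If `S ⊆ A ∪ B` induces a copy of the path
`P_k` with `k ≥ 5`, then `S ⊆ A` or `S ⊆ B`. -/
theorem induced_path_in_one_side {V : Type*} [Fintype V] (G : SimpleGraph V)
    (A B : Set V) (hAB : Disjoint A B)
    (hadj : ∀ a ∈ A, ∀ b ∈ B, G.Adj a b)
    (k : ℕ) (hk : 5 ≤ k) (S : Set V) (hS : S ⊆ A ∪ B)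
    (hcopy : Nonempty (G.induce S ≃g SimpleGraph.pathGraph k)) :
    S ⊆ A ∨ S ⊆ B := by
  classical
  by_contra hcon
  push_neg at hcon
  obtain ⟨x, hxS, hxA⟩ := Set.not_subset.1 hcon.1
  obtain ⟨y, hyS, hyB⟩ := Set.not_subset.1 hcon.2
  have hxB : x ∈ B := (hS hxS).resolve_left hxA
  have hyA : y ∈ A := (hS hyS).resolve_right hyB
  obtain ⟨f⟩ := hcopy
  have h1 : (S ∩ A) ∪ (S ∩ B) = S := by
    rw [← Set.inter_union_distrib_left]
    exact Set.inter_eq_left.2 hS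
  have h2 : Disjoint (S ∩ A) (S ∩ B) :=
    hAB.mono Set.inter_subset_right Set.inter_subset_right
  have h3 : S.ncard = k := by
    rw [← Nat.card_coe_set_eq, Nat.card_congr f.toEquiv,
      Nat.card_eq_fintype_card, Fintype.card_fin]
  have hcard : (S ∩ A).ncard + (S ∩ B).ncard = k := by
    rw [← Set.ncard_union_eq h2 (Set.toFinite _) (Set.toFinite _), h1, h3]
  rcases le_or_gt 3 ((S ∩ A).ncard) with h | h
  · exact aux_three_neighbors G k S A f h x hxS
      (fun a ha => hadj a ha.2 x hxB)
  · have h' : 3 ≤ (S ∩ B).ncard := by omega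
    exact aux_three_neighbors G k S B f h' y hyS
      (fun a ha => (hadj y hyA a ha.2).symm)
end

section
/- Let G and H be finite simple graphs with H having at least one vertex, and let A be a finite set of vertices of G. Suppose that for each a ∈ A there are two induced copies C_a and C'_a of H in G with C_a ∩ C'_a = {a}, such that the sets (C_a ∪ C'_a) \ {a}, taken over all a ∈ A, are pairwise disjoint and each disjoint from A. Then every H-deletion set S of G with |S| ≤ |A| satisfies S = A. -/
/-- Suppose each vertex `a` of a finite set `A` is the sole
intersection of two induced copies `C a` and `C' a` of `H` in `G`, the
punctured unions `(C a ∪ C' a) \ {a}` being pairwise disjoint and disjoint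
from `A`. Then every `H`-deletion set `S` of `G` with `|S| ≤ |A|` equals
`A`. -/
theorem advice_set_is_unique_optimum {V W : Type*} [Fintype V] [Fintype W]
    (G : SimpleGraph V) (H : SimpleGraph W) (hW : Nonempty W)
    (A : Finset V) (C C' : V → Set V)
    (hcopy : ∀ a ∈ A, Nonempty (G.induce (C a) ≃g H))
    (hcopy' : ∀ a ∈ A, Nonempty (G.induce (C' a) ≃g H))
    (hinter : ∀ a ∈ A, C a ∩ C' a = {a})
    (hdisj : ∀ a ∈ A, ∀ b ∈ A, a ≠ b →
      Disjoint ((C a ∪ C' a) \ {a}) ((C b ∪ C' b) \ {b}))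
    (hdisjA : ∀ a ∈ A, Disjoint ((C a ∪ C' a) \ {a}) (↑A : Set V))
    (S : Finset V)
    (hdel : ∀ T : Set V, T ⊆ (↑S : Set V)ᶜ → ¬ Nonempty (G.induce T ≃g H))
    (hcard : S.card ≤ A.card) :
    S = A := by
  classical
  -- S meets every induced copy of H
  have hmeet : ∀ (D : Set V), Nonempty (G.induce D ≃g H) → ∃ x ∈ S, x ∈ D := by
    intro D hD
    by_contra h
    push_neg at h
    exact hdel D (fun x hx hxS => h x hxS hx) hD
  set F : V → Finset V := fun a => S.filter (fun s => s = a ∨ s ∈ C a ∨ s ∈ C' a) with hF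
  -- pairwise disjointness of the F a
  have hFdisj : ∀ a ∈ A, ∀ b ∈ A, a ≠ b → Disjoint (F a) (F b) := by
    intro a ha b hb hab
    rw [Finset.disjoint_left]
    intro x hxa hxb
    simp only [hF, Finset.mem_filter] at hxa hxb
    obtain ⟨hxS, hxa⟩ := hxa
    obtain ⟨_, hxb⟩ := hxb
    have hPA : ∀ c ∈ A, c ≠ x → (x ∈ C c ∨ x ∈ C' c) → x ∉ (↑A : Set V) := by
      intro c hc hcx hx
      exact fun hxA => (Set.disjoint_left.mp (hdisjA c hc))
        ⟨by rcases hx with h | h; exact Or.inl h; exact Or.inr h,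
          by simp [Ne.symm hcx]⟩ hxA
    rcases hxa with rfl | hxa
    · rcases hxb with rfl | hxb
      · exact hab rfl
      · exact hPA b hb (fun h => hab h.symm) hxb (by simpa using ha)
    · rcases hxb with rfl | hxb
      · exact hPA a ha hab hxa (by simpa using hb)
      · by_cases hxa' : x = a
        · subst hxa'
          exact hPA b hb (fun h => hab h.symm) hxb (by simpa using ha)
        · by_cases hxb' : x = b
          · subst hxb'
            exact hPA a ha hab hxa (by simpa using hb)
          · exact (Set.disjoint_left.mp (hdisj a ha b hb hab))
              ⟨by rcases hxa with h | h; exact Or.inl h; exact Or.inr h, by simp [hxa']⟩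
              ⟨by rcases hxb with h | h; exact Or.inl h; exact Or.inr h, by simp [hxb']⟩
  -- sum of cards is at most |S|
  have hsum_le : ∑ a ∈ A, (F a).card ≤ S.card := by
    rw [← Finset.card_biUnion hFdisj]
    apply Finset.card_le_card
    intro x hx
    simp only [Finset.mem_biUnion, hF, Finset.mem_filter] at hx
    obtain ⟨a, _, hxS, _⟩ := hx
    exact hxS
  -- each F a is nonempty
  have hone : ∀ a ∈ A, 1 ≤ (F a).card := by
    intro a ha
    obtain ⟨x, hxS, hxC⟩ := hmeet (C a) (hcopy a ha)
    exact Finset.card_pos.mpr ⟨x, by simp [hF, hxS, hxC]⟩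
  -- A ⊆ S
  have hAS : A ⊆ S := by
    intro a ha
    by_contra haS
    obtain ⟨x, hxS, hxC⟩ := hmeet (C a) (hcopy a ha)
    obtain ⟨y, hyS, hyC⟩ := hmeet (C' a) (hcopy' a ha)
    have hxy : x ≠ y := by
      rintro rfl
      have : x ∈ C a ∩ C' a := ⟨hxC, hyC⟩
      rw [hinter a ha] at this
      simp only [Set.mem_singleton_iff] at this
      exact haS (this ▸ hxS)
    have htwo : 1 < (F a).card := by
      rw [Finset.one_lt_card_iff]
      exact ⟨x, y, by simp [hF, hxS, hxC], by simp [hF, hyS, hyC], hxy⟩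
    have : ∑ _a ∈ A, 1 < ∑ a ∈ A, (F a).card :=
      Finset.sum_lt_sum hone ⟨a, ha, htwo⟩
    simp only [Finset.sum_const, smul_eq_mul, mul_one] at this
    omega
  exact (Finset.eq_of_subset_of_card_le hAS hcard).symm
end

section
/- Let k > 1, m > 0, and w be real numbers, and let x be a real number with m·k ≤ x ≤ m·w. Then (x + 1)/(x − m·(k − 1) + 1) ≥ w/(w − k + 1 + 1/m). -/
/-- The key inequality in the proof of Theorem 8. -/
theorem ratio_ineq_thm8 (k m w x : ℝ) (hk : 1 < k) (hm : 0 < m)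
    (hx1 : m * k ≤ x) (hx2 : x ≤ m * w) :
    (x + 1) / (x - m * (k - 1) + 1) ≥ w / (w - k + 1 + 1 / m) := by
  have hkw : k ≤ w := by
    have := hx1.trans hx2
    nlinarith
  have hd1 : 0 < x - m * (k - 1) + 1 := by nlinarith
  have hd2 : 0 < w - k + 1 + 1 / m := by
    have : 0 < 1 / m := by positivity
    nlinarith
  rw [ge_iff_le, div_le_div_iff₀ hd2 hd1]
  have key : m * ((x + 1) * (w - k + 1 + 1 / m)) = m * (x + 1) * (w - k + 1) + (x + 1) := by
    field_simp
  nlinarith [key, mul_nonneg (mul_nonneg hm.le (by linarith : (0:ℝ) ≤ k - 1))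
    (by linarith : (0:ℝ) ≤ m * w - x)]
end

section
/- Let k > 1, m > 0, and w be real numbers, let a be a real number with 0 ≤ a ≤ m, and let x be a real number with m·k ≤ x ≤ m·w. Then (x + a)/(x − m·(k − 1) + a) ≥ (w + 1)/(w − k + 2). -/
/-- The key inequality in the proof of Theorem 7. -/
theorem ratio_ineq_thm7 (k m w a x : ℝ) (hk : 1 < k) (hm : 0 < m)
    (ha0 : 0 ≤ a) (ham : a ≤ m) (hx1 : m * k ≤ x) (hx2 : x ≤ m * w) :
    (x + a) / (x - m * (k - 1) + a) ≥ (w + 1) / (w - k + 2) := by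
  have hwk : k ≤ w := by
    nlinarith
  have hd1 : 0 < x - m * (k - 1) + a := by nlinarith
  have hd2 : 0 < w - k + 2 := by linarith
  rw [ge_iff_le, div_le_div_iff₀ hd2 hd1]
  nlinarith [mul_nonneg (sub_nonneg.2 hx2) (sub_pos.2 hk).le]
end
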